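/- Let (X,Σ,μ,T) be a measure-preserving system with zero entropy in the sense that for every finite measurable partition P, lim_{n→∞} H(η, P_n)/n = 0, where η(x) = −x log₂ x. Let g:[0,1]→ℝ be concave with g(0) = lim_{x→0⁺} g(x) = 0 such that lim_{x→0⁺} g(x)/η(x) exists and is finite. Then for every finite measurable partition P of X, lim_{n→∞} H(g, P_n)/n = 0. -/

import Mathlib

open MeasureTheory Filter Set

/-- The `g`-entropy `H(g, P_n)` of the join partition
`P_n = P ∨ T⁻¹P ∨ ⋯ ∨ T^{-(n-1)}P` of a finite partition `P` indexed by `Fin k`. -/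
noncomputable def joinEnt {X : Type*} [MeasurableSpace X] (μ : Measure X) (T : X → X)
    (g : ℝ → ℝ) {k : ℕ} (P : Fin k → Set X) (n : ℕ) : ℝ :=
  ∑ f : Fin n → Fin k,
    g ((μ (⋂ i : Fin n, T^[(i : ℕ)] ⁻¹' P (f i))).toReal)

/-- The Shannon function `η(x) = −x·log₂ x`. -/
noncomputable def shannonF : ℝ → ℝ := fun x => -(x * Real.logb 2 x)

/-!
On some interval `(0, δ)` the finite limit of `g / η` gives `|g| ≤ C η`, and on `[δ, 1]` the
concave function `g` is bounded by some `M`. Since at most `1 / δ` cells of `Pₙ` have measure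
`≥ δ`, this yields `|H(g, Pₙ)| ≤ C H(η, Pₙ) + M / δ`; divide by `n`.
-/

open scoped Finset

lemma shannonF_nonneg {x : ℝ} (h0 : 0 ≤ x) (h1 : x ≤ 1) : 0 ≤ shannonF x :=
  neg_nonneg.mpr (mul_nonpos_of_nonneg_of_nonpos h0 (Real.logb_nonpos one_lt_two h0 h1))

lemma shannonF_pos {x : ℝ} (h0 : 0 < x) (h1 : x < 1) : 0 < shannonF x :=
  neg_pos.mpr (mul_neg_of_pos_of_neg h0 (Real.logb_neg one_lt_two h0 h1))

/-- The upper bound comes from `g x + g (a + b - x) ≤ 2 g ((a + b) / 2)`. -/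
lemma ConcaveOn.exists_abs_le_on_Icc {g : ℝ → ℝ} {a b : ℝ}
    (hg : ConcaveOn ℝ (Icc a b) g) :
    ∃ M, ∀ x ∈ Icc a b, |g x| ≤ M := by
  set lo := min (g a) (g b)
  set hi := 2 * g ((a + b) / 2) - lo
  have hlo : ∀ x ∈ Icc a b, lo ≤ g x := fun x hx =>
    hg.ge_on_segment (left_mem_Icc.mpr (hx.1.trans hx.2)) (right_mem_Icc.mpr (hx.1.trans hx.2))
      (by rwa [segment_eq_Icc (hx.1.trans hx.2)])
  refine ⟨|lo| + |hi|, fun x hx => abs_le.mpr ⟨?_, ?_⟩⟩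
  · linarith [hlo x hx, neg_abs_le lo, abs_nonneg hi]
  · have hx' : a + b - x ∈ Icc a b := ⟨by linarith [hx.2], by linarith [hx.1]⟩
    have hmid := hg.2 hx hx' (by norm_num : (0 : ℝ) ≤ 1 / 2) (by norm_num : (0 : ℝ) ≤ 1 / 2)
      (by norm_num)
    simp only [smul_eq_mul] at hmid
    rw [show 1 / 2 * x + 1 / 2 * (a + b - x) = (a + b) / 2 by ring] at hmid
    linarith [hlo _ hx', le_abs_self hi, abs_nonneg lo]

lemma exists_abs_le_mul_shannonF_add_ite {g : ℝ → ℝ} (hconc : ConcaveOn ℝ (Icc 0 1) g)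
    (hg0 : g 0 = 0)
    (hlim : ∃ L : ℝ, Tendsto (fun x => g x / shannonF x) (nhdsWithin 0 (Ioi 0)) (nhds L)) :
    ∃ C M δ : ℝ, 0 < δ ∧ 0 ≤ C ∧ 0 ≤ M ∧
      ∀ x ∈ Icc (0 : ℝ) 1, |g x| ≤ C * shannonF x + if δ ≤ x then M else 0 := by
  obtain ⟨L, hL⟩ := hlim
  have hη : ∀ᶠ x in nhdsWithin 0 (Ioi 0), 0 < shannonF x := by
    filter_upwards [Ioo_mem_nhdsGT one_pos] with x hx using shannonF_pos hx.1 hx.2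
  obtain ⟨C, hC, hgC⟩ := (Asymptotics.isBigO_of_div_tendsto_nhds
    (hη.mono fun x hx h => absurd h hx.ne') L hL).exists_pos
  obtain ⟨δ, hδ, hsmall⟩ := mem_nhdsGT_iff_exists_Ioo_subset.mp (hgC.bound.and hη)
  obtain ⟨M, hM⟩ := hconc.exists_abs_le_on_Icc
  refine ⟨C, M, δ, hδ, hC.le, (abs_nonneg _).trans (hM 0 ⟨le_rfl, zero_le_one⟩), ?_⟩
  intro x hx
  split_ifs with hxδ
  · linarith [hM x hx, mul_nonneg hC.le (shannonF_nonneg hx.1 hx.2)]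
  · rcases hx.1.eq_or_lt with rfl | hx0
    · simp [hg0, shannonF]
    · obtain ⟨hb, hpos⟩ := hsmall ⟨hx0, not_le.mp hxδ⟩
      simpa [Real.norm_eq_abs, abs_of_pos hpos] using hb

lemma mul_card_filter_le_sum {ι : Type*} (s : Finset ι) (c : ι → ℝ) (δ : ℝ)
    (hc : ∀ i ∈ s, 0 ≤ c i) : δ * #{i ∈ s | δ ≤ c i} ≤ ∑ i ∈ s, c i := by
  calc δ * #{i ∈ s | δ ≤ c i} = ∑ i ∈ s with δ ≤ c i, δ := by simp [mul_comm]
    _ ≤ ∑ i ∈ s with δ ≤ c i, c i :=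
      Finset.sum_le_sum fun i hi => (Finset.mem_filter.mp hi).2
    _ ≤ ∑ i ∈ s, c i :=
      Finset.sum_le_sum_of_subset_of_nonneg (Finset.filter_subset _ _) fun i hi _ => hc i hi

lemma abs_sum_le_sum_add_div {ι : Type*} (s : Finset ι) (a b c : ι → ℝ) {M δ : ℝ}
    (hδ : 0 < δ) (hM : 0 ≤ M) (hc : ∀ i ∈ s, 0 ≤ c i) (hsum : ∑ i ∈ s, c i ≤ 1)
    (hab : ∀ i ∈ s, |a i| ≤ b i + if δ ≤ c i then M else 0) :
    |∑ i ∈ s, a i| ≤ ∑ i ∈ s, b i + M / δ := by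
  have hcard : (#{i ∈ s | δ ≤ c i} : ℝ) ≤ 1 / δ := by
    rw [le_div_iff₀ hδ, mul_comm]
    exact (mul_card_filter_le_sum s c δ hc).trans hsum
  calc |∑ i ∈ s, a i| ≤ ∑ i ∈ s, |a i| := Finset.abs_sum_le_sum_abs _ _
    _ ≤ ∑ i ∈ s, (b i + if δ ≤ c i then M else 0) := Finset.sum_le_sum hab
    _ = ∑ i ∈ s, b i + #{i ∈ s | δ ≤ c i} * M := by
      rw [Finset.sum_add_distrib, ← Finset.sum_filter, Finset.sum_const, nsmul_eq_mul]
    _ ≤ ∑ i ∈ s, b i + M / δ := by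
      grw [hcard]; rw [one_div_mul_eq_div]

section JoinCell

variable {X : Type*} {T : X → X} {k n : ℕ} {P : Fin k → Set X}

def joinCell (T : X → X) (P : Fin k → Set X) (f : Fin n → Fin k) : Set X :=
  ⋂ i : Fin n, T^[(i : ℕ)] ⁻¹' P (f i)

lemma joinEnt_eq_sum_joinCell [MeasurableSpace X] (μ : Measure X) (g : ℝ → ℝ) :
    joinEnt μ T g P n = ∑ f : Fin n → Fin k, g (μ.real (joinCell T P f)) := rfl

lemma measurableSet_joinCell [MeasurableSpace X] (hT : Measurable T)
    (hP : ∀ i, MeasurableSet (P i)) (f : Fin n → Fin k) : MeasurableSet (joinCell T P f) :=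
  MeasurableSet.iInter fun i => (hP (f i)).preimage (hT.iterate i)

lemma pairwise_disjoint_joinCell (hP : ∀ i j, i ≠ j → Disjoint (P i) (P j)) :
    Pairwise (Function.onFun Disjoint (joinCell T P : (Fin n → Fin k) → Set X)) := by
  intro f f' hne
  obtain ⟨i, hi⟩ := Function.ne_iff.mp hne
  exact ((hP _ _ hi).preimage T^[(i : ℕ)]).mono (iInter_subset _ i) (iInter_subset _ i)

lemma sum_measureReal_joinCell_le_one [MeasurableSpace X] (μ : Measure X) [IsProbabilityMeasure μ]
    (hT : Measurable T) (hPmeas : ∀ i, MeasurableSet (P i))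
    (hPdisj : ∀ i j, i ≠ j → Disjoint (P i) (P j)) :
    ∑ f : Fin n → Fin k, μ.real (joinCell T P f) ≤ 1 := by
  rw [← measureReal_biUnion_finset ((pairwise_disjoint_joinCell hPdisj).set_pairwise _)
    (fun f _ => measurableSet_joinCell hT hPmeas f)]
  exact measureReal_le_one

end JoinCell

lemma tendsto_div_natCast_zero_of_abs_le {a b : ℕ → ℝ} {C K : ℝ}
    (hab : ∀ n, |a n| ≤ C * b n + K) (hb : Tendsto (fun n => b n / n) atTop (nhds 0)) :
    Tendsto (fun n => a n / n) atTop (nhds 0) := by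
  have hlim : Tendsto (fun n : ℕ => C * (b n / n) + K / n) atTop (nhds 0) := by
    simpa using (hb.const_mul C).add (tendsto_const_div_atTop_nhds_zero_nat K)
  refine squeeze_zero_norm' ?_ hlim
  filter_upwards [eventually_gt_atTop 0] with n hn
  have hn' : (0 : ℝ) < n := Nat.cast_pos.mpr hn
  rw [Real.norm_eq_abs, abs_div, abs_of_pos hn', mul_div_assoc', ← add_div]
  exact div_le_div_of_nonneg_right (hab n) hn'.le

theorem statement13_general {X : Type*} [MeasurableSpace X] (μ : Measure X)
    [IsProbabilityMeasure μ] (T : X → X) (hT : MeasurePreserving T μ μ)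
    (hzero : ∀ (k : ℕ) (P : Fin k → Set X), (∀ i, MeasurableSet (P i)) →
      (∀ i j, i ≠ j → Disjoint (P i) (P j)) → (⋃ i, P i) = Set.univ →
      Tendsto (fun n => joinEnt μ T shannonF P n / n) atTop (nhds 0))
    (g : ℝ → ℝ) (hconc : ConcaveOn ℝ (Set.Icc 0 1) g) (hg0 : g 0 = 0)
    (hlim : ∃ L : ℝ,
      Tendsto (fun x => g x / shannonF x) (nhdsWithin 0 (Set.Ioi 0)) (nhds L))
    (k : ℕ) (P : Fin k → Set X)
    (hPmeas : ∀ i, MeasurableSet (P i))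
    (hPdisj : ∀ i j, i ≠ j → Disjoint (P i) (P j))
    (hPcover : (⋃ i, P i) = Set.univ) :
    Tendsto (fun n => joinEnt μ T g P n / n) atTop (nhds 0) := by
  obtain ⟨C, M, δ, hδ, hC, hM, hgη⟩ := exists_abs_le_mul_shannonF_add_ite hconc hg0 hlim
  refine tendsto_div_natCast_zero_of_abs_le (C := C) (K := M / δ) (fun n => ?_)
    (hzero k P hPmeas hPdisj hPcover)
  rw [joinEnt_eq_sum_joinCell, joinEnt_eq_sum_joinCell, Finset.mul_sum]
  exact abs_sum_le_sum_add_div _ _ _ _ hδ hM (fun f _ => measureReal_nonneg)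
    (sum_measureReal_joinCell_le_one μ hT.measurable hPmeas hPdisj)
    (fun f _ => hgη _ ⟨measureReal_nonneg, measureReal_le_one⟩)

/-- If `(X,μ,T)` has zero entropy, i.e. `H(η, Pₙ)/n → 0` for every finite measurable
partition, and `g` is an entropy function such that `lim_{x→0⁺} g(x)/η(x)` exists and is
finite, then `H(g, Pₙ)/n → 0` for every finite measurable partition `P`. -/
theorem statement13 {X : Type*} [MeasurableSpace X] (μ : Measure X)
    [IsProbabilityMeasure μ] (T : X → X) (hT : MeasurePreserving T μ μ)
    (hzero : ∀ (k : ℕ) (P : Fin k → Set X), (∀ i, MeasurableSet (P i)) →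
      (∀ i j, i ≠ j → Disjoint (P i) (P j)) → (⋃ i, P i) = Set.univ →
      Tendsto (fun n => joinEnt μ T shannonF P n / n) atTop (nhds 0))
    (g : ℝ → ℝ) (hconc : ConcaveOn ℝ (Set.Icc 0 1) g) (hg0 : g 0 = 0)
    (hg0' : Tendsto g (nhdsWithin 0 (Set.Ioi 0)) (nhds 0))
    (hlim : ∃ L : ℝ,
      Tendsto (fun x => g x / shannonF x) (nhdsWithin 0 (Set.Ioi 0)) (nhds L))
    (k : ℕ) (P : Fin k → Set X)
    (hPmeas : ∀ i, MeasurableSet (P i))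
    (hPdisj : ∀ i j, i ≠ j → Disjoint (P i) (P j))
    (hPcover : (⋃ i, P i) = Set.univ) :
    Tendsto (fun n => joinEnt μ T g P n / n) atTop (nhds 0) :=
  statement13_general μ T hT hzero g hconc hg0 hlim k P hPmeas hPdisj hPcover
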